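/- Under the combinatorial-sum setup, assume the Bernstein-type condition (bern) with constants M_n, D, and fix j with Σ_{i=1}^n E X_{nij} = 0. Define b_{nij}(z) = e^{−z²/(2n)} E e^{z X_{nij}/√B_n} − 1. Then there exists a constant C₂ > 0 depending only on D such that for every complex z with |z| ≤ min{√n, √B_n/M_n}/8, |Σ_{i=1}^n b_{nij}(z)| ≤ C₂ |z|² (1 + Σ_{i=1}^n E X_{nij}²/B_n). -/

import Mathlib

/-! With `a = z / √B` and `c = exp (-z² / (2n))`, each summand is
`c (E exp (a X) - 1 - a E X) + (c - 1) + c a E X`; the last terms cancel over a centered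
column, and `n ‖c - 1‖ ≤ ‖z‖²`. Expanding `E exp (a X)` into its moment series, Bernstein's
condition bounds the `k`-th term by `D E X² ‖a‖² (‖a‖ M)^(k-2)`, so the remainder after the
linear term is a geometric tail of size `O(D ‖a‖² E X²)`. Term-by-term integration needs the
absolute moment series to converge; the even moments control it because
`t^(k+1)/(k+1)! ≤ t^k/k! + t^(k+2)/(k+2)!` for `t ≥ 0`. -/

open MeasureTheory Real
open scoped Nat

lemma pow_succ_div_factorial_le {u : ℝ} (hu : 0 ≤ u) (k : ℕ) :
    u ^ (k + 1) / (k + 1)! ≤ u ^ k / k ! + u ^ (k + 2) / (k + 2)! := by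
  have hk : (0 : ℝ) < k ! := by positivity
  rw [Nat.factorial_succ (k + 1), Nat.factorial_succ k]
  push_cast
  rw [div_add_div _ _ hk.ne' (by positivity), div_le_div_iff₀ (by positivity) (by positivity)]
  have hquad : 0 ≤ u ^ 2 - (k + 2) * u + (k + 1) * (k + 2) := by
    nlinarith [sq_nonneg (u - (k + 2) / 2)]
  have hfac : (0 : ℝ) ≤ k ! * k ! * (k + 1) := by positivity
  have := mul_nonneg (mul_nonneg (pow_nonneg hu k) hquad) hfac
  rw [pow_succ, pow_add]
  linarith

section Moments

variable {Ω : Type*} [MeasurableSpace Ω] {μ : Measure Ω} {x : Ω → ℝ}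

lemma integrable_mul_abs_pow_div_factorial (hint : ∀ k : ℕ, Integrable (fun ω => |x ω| ^ k) μ)
    (r : ℝ) (k : ℕ) : Integrable (fun ω => (r * |x ω|) ^ k / k !) μ := by
  simpa only [mul_pow] using ((hint k).const_mul (r ^ k)).div_const _

lemma summable_integral_mul_abs_pow_div_factorial
    (hint : ∀ k : ℕ, Integrable (fun ω => |x ω| ^ k) μ) {r : ℝ} (hr : 0 ≤ r)
    (heven : Summable fun m : ℕ => ∫ ω, (r * x ω) ^ (2 * m) / (2 * m)! ∂μ) :
    Summable fun k : ℕ => ∫ ω, (r * |x ω|) ^ k / k ! ∂μ := by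
  set c : ℕ → ℝ := fun k => ∫ ω, (r * |x ω|) ^ k / k ! ∂μ
  have hc_even : Summable fun m => c (2 * m) := by
    refine heven.congr fun m => integral_congr_ae (.of_forall fun ω => ?_)
    dsimp only
    rw [← (even_two_mul m).pow_abs (r * x ω), abs_mul, abs_of_nonneg hr]
  have hc_odd (m : ℕ) : c (2 * m + 1) ≤ c (2 * m) + c (2 * (m + 1)) := by
    have hint' := integrable_mul_abs_pow_div_factorial hint r
    rw [mul_add_one, ← integral_add (hint' _) (hint' _)]
    exact integral_mono (hint' _) ((hint' _).add (hint' _))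
      fun ω => pow_succ_div_factorial_le (mul_nonneg hr (abs_nonneg _)) _
  have hc_nonneg (k : ℕ) : 0 ≤ c k :=
    integral_nonneg fun ω => by positivity
  refine hc_even.even_add_odd (Summable.of_nonneg_of_le (fun m => hc_nonneg _) hc_odd ?_)
  exact hc_even.add ((summable_nat_add_iff 1).2 hc_even)

lemma hasSum_integral_cexp_mul (hx : Measurable x)
    (hint : ∀ k : ℕ, Integrable (fun ω => |x ω| ^ k) μ) (a : ℂ)
    (hs : Summable fun k : ℕ => ∫ ω, (‖a‖ * |x ω|) ^ k / k ! ∂μ) :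
    HasSum (fun k : ℕ => a ^ k / k ! * ((∫ ω, x ω ^ k ∂μ : ℝ) : ℂ))
      (∫ ω, Complex.exp (a * x ω) ∂μ) := by
  have hpow (k : ℕ) : Integrable (fun ω => x ω ^ k) μ :=
    (integrable_norm_iff (hx.pow_const k).aestronglyMeasurable).1
      (by simpa only [norm_pow, Real.norm_eq_abs] using hint k)
  have hF (k : ℕ) : (fun ω => (a * x ω) ^ k / (k ! : ℂ)) =
      fun ω => a ^ k / k ! * ((x ω ^ k : ℝ) : ℂ) := by
    funext ω; push_cast; ring
  have hexp (ω : Ω) : ∑' k : ℕ, (a * x ω) ^ k / (k ! : ℂ) = Complex.exp (a * x ω) := by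
    rw [Complex.exp_eq_exp_ℂ]
    exact (NormedSpace.expSeries_div_hasSum_exp _).tsum_eq
  have hsum := hasSum_integral_of_summable_integral_norm
    (F := fun k ω => (a * x ω) ^ k / (k ! : ℂ))
    (fun k => by rw [hF]; exact (hpow k).ofReal.const_mul _)
    (hs.congr fun k => integral_congr_ae (.of_forall fun ω => by simp [mul_pow]))
  simp only [hexp] at hsum
  refine hsum.congr_fun fun k => ?_
  rw [hF, integral_const_mul, integral_complex_ofReal]

/-- The case `s = 2` of the Bernstein moment condition. -/
def HasBernsteinMoments (μ : Measure Ω) (x : Ω → ℝ) (D M : ℝ) : Prop :=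
  ∀ k : ℕ, 2 ≤ k → |∫ ω, x ω ^ k ∂μ| ≤ D * k ! * M ^ (k - 2) * ∫ ω, x ω ^ 2 ∂μ

lemma HasBernsteinMoments.pow_div_factorial_mul_abs_le {D M : ℝ}
    (hbern : HasBernsteinMoments μ x D M) {r : ℝ} (hr : 0 ≤ r) (k : ℕ) :
    r ^ (k + 2) / (k + 2)! * |∫ ω, x ω ^ (k + 2) ∂μ|
      ≤ D * (∫ ω, x ω ^ 2 ∂μ) * r ^ 2 * (r * M) ^ k := by
  calc _ ≤ r ^ (k + 2) / (k + 2)! * (D * (k + 2)! * M ^ k * ∫ ω, x ω ^ 2 ∂μ) := by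
        gcongr
        simpa using hbern (k + 2) (by omega)
    _ = _ := by field_simp; ring

lemma HasBernsteinMoments.summable_integral_mul_pow_two_mul_div_factorial {D M : ℝ}
    (hbern : HasBernsteinMoments μ x D M) (hM : 0 ≤ M) {r : ℝ} (hr : 0 ≤ r) (hrM : r * M < 1) :
    Summable fun m : ℕ => ∫ ω, (r * x ω) ^ (2 * m) / (2 * m)! ∂μ := by
  rw [← summable_nat_add_iff 1]
  refine Summable.of_nonneg_of_le
    (fun m => integral_nonneg fun ω => div_nonneg ((even_two_mul _).pow_nonneg _) (by positivity))
    (fun m => ?_)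
    ((summable_geometric_of_lt_one (sq_nonneg (r * M)) (by nlinarith [mul_nonneg hr hM])).mul_left
      (D * (∫ ω, x ω ^ 2 ∂μ) * r ^ 2))
  calc _ = r ^ (2 * m + 2) / (2 * m + 2)! * ∫ ω, x ω ^ (2 * m + 2) ∂μ := by
        simp only [mul_add_one, mul_pow, integral_div, integral_const_mul]
        ring
    _ ≤ r ^ (2 * m + 2) / (2 * m + 2)! * |∫ ω, x ω ^ (2 * m + 2) ∂μ| := by
        gcongr; exact le_abs_self _
    _ ≤ D * (∫ ω, x ω ^ 2 ∂μ) * r ^ 2 * (r * M) ^ (2 * m) :=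
        hbern.pow_div_factorial_mul_abs_le hr (2 * m)
    _ = D * (∫ ω, x ω ^ 2 ∂μ) * r ^ 2 * ((r * M) ^ 2) ^ m := by rw [← pow_mul]

lemma hasSum_integral_cexp_mul_sub_one_sub [IsProbabilityMeasure μ] {a : ℂ}
    (hsum : HasSum (fun k : ℕ => a ^ k / k ! * ((∫ ω, x ω ^ k ∂μ : ℝ) : ℂ))
      (∫ ω, Complex.exp (a * x ω) ∂μ)) :
    HasSum (fun k : ℕ => a ^ (k + 2) / (k + 2)! * ((∫ ω, x ω ^ (k + 2) ∂μ : ℝ) : ℂ))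
      (∫ ω, Complex.exp (a * x ω) ∂μ - 1 - a * ((∫ ω, x ω ∂μ : ℝ) : ℂ)) := by
  have hfirst : ∑ k ∈ Finset.range 2, a ^ k / k ! * ((∫ ω, x ω ^ k ∂μ : ℝ) : ℂ)
      = 1 + a * ((∫ ω, x ω ∂μ : ℝ) : ℂ) := by
    simp [Finset.sum_range_succ]
  rw [sub_sub, ← hfirst]
  exact (hasSum_nat_add_iff' 2).2 hsum

theorem norm_integral_cexp_sub_one_sub_le [IsProbabilityMeasure μ] (hx : Measurable x)
    (hint : ∀ k : ℕ, Integrable (fun ω => |x ω| ^ k) μ) {D M : ℝ} (hM : 0 ≤ M)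
    (hbern : HasBernsteinMoments μ x D M) {a : ℂ} (ha : ‖a‖ * M ≤ 1 / 2) :
    ‖∫ ω, Complex.exp (a * x ω) ∂μ - 1 - a * ((∫ ω, x ω ∂μ : ℝ) : ℂ)‖
      ≤ 2 * D * ‖a‖ ^ 2 * ∫ ω, x ω ^ 2 ∂μ := by
  set r := ‖a‖
  set K := D * (∫ ω, x ω ^ 2 ∂μ) * r ^ 2 with hK_def
  have hq : 0 ≤ r * M := by positivity
  have htail := hasSum_integral_cexp_mul_sub_one_sub <| hasSum_integral_cexp_mul hx hint a <|
    summable_integral_mul_abs_pow_div_factorial hint (norm_nonneg a) <|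
      hbern.summable_integral_mul_pow_two_mul_div_factorial hM (norm_nonneg a) (by linarith)
  have hbound (k : ℕ) :
      ‖a ^ (k + 2) / (k + 2)! * ((∫ ω, x ω ^ (k + 2) ∂μ : ℝ) : ℂ)‖ ≤ K * (r * M) ^ k := by
    simpa [norm_mul, norm_div, norm_pow] using hbern.pow_div_factorial_mul_abs_le (norm_nonneg a) k
  have hK : 0 ≤ K := (norm_nonneg _).trans ((hbound 0).trans_eq (by rw [pow_zero, mul_one]))
  calc _ ≤ K * (1 - r * M)⁻¹ :=
        htail.norm_le_of_bounded ((hasSum_geometric_of_lt_one hq (by linarith)).mul_left K) hbound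
    _ ≤ K * 2 := by
        gcongr
        rw [inv_le_comm₀ (by linarith) two_pos]
        linarith
    _ = _ := by rw [hK_def]; ring

end Moments

lemma sum_mul_sub_one_eq_of_sum_eq_zero {ι R : Type*} [CommRing R] (s : Finset ι) (c a : R)
    (f g : ι → R) (hg : ∑ i ∈ s, g i = 0) :
    ∑ i ∈ s, (c * f i - 1) = c * ∑ i ∈ s, (f i - 1 - a * g i) + s.card * (c - 1) := by
  simp only [Finset.sum_sub_distrib, ← Finset.mul_sum, hg, Finset.sum_const, nsmul_eq_mul]
  ring

section GaussianFactor

variable {z : ℂ} {n : ℕ}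

lemma norm_neg_sq_div_two_mul_natCast (z : ℂ) (n : ℕ) :
    ‖-z ^ 2 / (2 * n)‖ = ‖z‖ ^ 2 / (2 * n) := by
  simp [norm_pow]

lemma norm_neg_sq_div_two_mul_natCast_le_one (hz : ‖z‖ ^ 2 ≤ 2 * n) :
    ‖-z ^ 2 / (2 * n)‖ ≤ 1 := by
  rw [norm_neg_sq_div_two_mul_natCast]
  exact div_le_one_of_le₀ hz (by positivity)

lemma norm_cexp_neg_sq_div_le_three (hz : ‖z‖ ^ 2 ≤ 2 * n) :
    ‖Complex.exp (-z ^ 2 / (2 * n))‖ ≤ 3 :=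
  (Complex.norm_exp_le_exp_norm _).trans <|
    (exp_le_exp.2 (norm_neg_sq_div_two_mul_natCast_le_one hz)).trans
      (exp_one_lt_d9.le.trans (by norm_num))

lemma natCast_mul_norm_cexp_neg_sq_div_sub_one_le (hz : ‖z‖ ^ 2 ≤ 2 * n) :
    n * ‖Complex.exp (-z ^ 2 / (2 * n)) - 1‖ ≤ ‖z‖ ^ 2 :=
  calc _ ≤ n * (2 * ‖-z ^ 2 / (2 * n)‖) := by
        gcongr
        exact Complex.norm_exp_sub_one_le (norm_neg_sq_div_two_mul_natCast_le_one hz)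
    _ = ‖z‖ ^ 2 * ((2 * n) / (2 * n)) := by rw [norm_neg_sq_div_two_mul_natCast]; ring
    _ ≤ ‖z‖ ^ 2 := mul_le_of_le_one_right (sq_nonneg _) (div_self_le_one _)

end GaussianFactor

lemma norm_div_sqrt_mul_le {z : ℂ} {B M c : ℝ} (hB : 0 < B) (hM : 0 < M)
    (hz : ‖z‖ ≤ √B / M * c) : ‖z / √B‖ * M ≤ c := by
  have hsB : 0 < √B := sqrt_pos.2 hB
  calc ‖z / √B‖ * M = ‖z‖ * (M / √B) := by
        rw [norm_div, Complex.norm_real, norm_of_nonneg hsB.le]; ring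
    _ ≤ √B / M * c * (M / √B) := by gcongr
    _ = c := by field_simp

/-- Column-sum bound (120): under the Bernstein-type condition (bern), if column `j` is
centered, then with `b_{nij}(z) = e^{−z²/(2n)} E e^{z X_{nij}/√B_n} − 1` there is `C₂ > 0`
depending only on `D` such that for `|z| ≤ min{√n, √B_n/M_n}/8`,
`|Σ_i b_{nij}(z)| ≤ C₂ |z|² (1 + Σ_i E X_{nij}²/B_n)`. -/
theorem column_sum_b_bound (D : ℝ) (hD : 0 < D) :
    ∃ C₂ > (0 : ℝ),
      ∀ (Ω : Type) (_ : MeasurableSpace Ω) (μ : Measure Ω), IsProbabilityMeasure μ →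
      ∀ (n : ℕ), 2 ≤ n →
      ∀ (X : Fin n → Fin n → Ω → ℝ), (∀ i j, Measurable (X i j)) →
      (∀ i j (k : ℕ), Integrable (fun ω => |X i j ω| ^ k) μ) →
      ∀ (M B : ℝ), 0 < M → 0 < B →
      B = (1 / n : ℝ) * ∑ i, ∑ j, ∫ ω, (X i j ω) ^ 2 ∂μ →
      (∀ s ∈ ({1, 2, 3} : Set ℕ), ∀ k : ℕ, s ≤ k → ∀ i j,
        |∫ ω, X i j ω ^ k ∂μ|
          ≤ D * (Nat.factorial k) * M ^ (k - s) * ∫ ω, |X i j ω| ^ s ∂μ) →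
      ∀ j : Fin n, (∑ i, ∫ ω, X i j ω ∂μ) = 0 →
      ∀ z : ℂ, ‖z‖ ≤ min (Real.sqrt n) (Real.sqrt B / M) / 8 →
        ‖∑ i, (Complex.exp (-z ^ 2 / (2 * n)) *
              (∫ ω, Complex.exp (z * (X i j ω : ℂ) / (Real.sqrt B : ℂ)) ∂μ) - 1)‖
          ≤ C₂ * ‖z‖ ^ 2 * (1 + (∑ i, ∫ ω, (X i j ω) ^ 2 ∂μ) / B) := by
  refine ⟨6 * D + 1, by linarith, ?_⟩
  intro Ω _ μ _ n _ X hX hint M B hM hB _ hbern j hcent z hz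
  set a : ℂ := z / (√B : ℂ)
  set S := ∑ i, ∫ ω, X i j ω ^ 2 ∂μ
  have hzn : ‖z‖ ^ 2 ≤ 2 * n := by
    have h := (Real.le_sqrt (norm_nonneg z) n.cast_nonneg).1 <|
      hz.trans ((div_le_self (by positivity) (by norm_num)).trans (min_le_left _ _))
    linarith [n.cast_nonneg (α := ℝ)]
  have haM : ‖a‖ * M ≤ 1 / 8 := norm_div_sqrt_mul_le hB hM <|
    hz.trans (by rw [div_eq_mul_one_div _ 8]; gcongr; exact min_le_right _ _)
  have hsum : ‖∑ i, (∫ ω, Complex.exp (a * X i j ω) ∂μ - 1 - a * ((∫ ω, X i j ω ∂μ : ℝ) : ℂ))‖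
      ≤ 2 * D * ‖a‖ ^ 2 * S := by
    rw [Finset.mul_sum]
    refine (norm_sum_le _ _).trans (Finset.sum_le_sum fun i _ => ?_)
    exact norm_integral_cexp_sub_one_sub_le (hX i j) (hint i j) hM.le
      (fun k hk => by simpa only [sq_abs] using hbern 2 (by simp) k hk i j) (by linarith)
  have hcent' : ∑ i, ((∫ ω, X i j ω ∂μ : ℝ) : ℂ) = 0 := by exact_mod_cast hcent
  have hS : 0 ≤ S / B :=
    div_nonneg (Finset.sum_nonneg fun i _ => integral_nonneg fun ω => sq_nonneg _) hB.le
  simp_rw [mul_div_right_comm z]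
  rw [sum_mul_sub_one_eq_of_sum_eq_zero _ _ a _ _ hcent', Finset.card_univ, Fintype.card_fin]
  calc _ ≤ 3 * (2 * D * ‖a‖ ^ 2 * S) + ‖z‖ ^ 2 := by
        refine (norm_add_le _ _).trans ?_
        rw [norm_mul, norm_mul, Complex.norm_natCast]
        gcongr
        exacts [norm_cexp_neg_sq_div_le_three hzn, natCast_mul_norm_cexp_neg_sq_div_sub_one_le hzn]
    _ = 6 * D * ‖z‖ ^ 2 * (S / B) + ‖z‖ ^ 2 := by
        rw [norm_div, Complex.norm_real, norm_of_nonneg (sqrt_nonneg B), div_pow,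
          sq_sqrt hB.le]
        ring
    _ ≤ (6 * D + 1) * ‖z‖ ^ 2 * (1 + S / B) := by
        nlinarith [mul_nonneg (sq_nonneg ‖z‖) hS, mul_nonneg hD.le (sq_nonneg ‖z‖)]
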